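/- arXiv:2211.00247 — 3 statements merged into one kernel-verified Lean document; each statement's English description precedes it below -/
import Mathlib

section
/- If X_1, ..., X_K are multinomially distributed with parameters m and p_1, ..., p_K, then for any M̄ > 0, the probability that ∑_{k=1}^K |X_k/m − p_k| ≥ M̄ is at most 2^K · exp(−m·M̄²/2). -/
/-!
Let `a_k = X_k / m - p_k`. These deviations sum to zero, so `∑ |a_k|` is twice the sum of the
nonnegative ones: if `∑ |a_k| ≥ M̄` then some set `A` of categories has
`∑_{k ∈ A} a_k ≥ M̄ / 2`. For fixed `A` this is the event that the sum of the `m` independent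
centred Bernoulli variables `1{Y_j ∈ A} - p(A)` reaches `m M̄ / 2`, which by Hoeffding has
probability at most `exp(-m M̄² / 2)`. A union bound over the `2^K` sets `A` concludes.
-/

open MeasureTheory ProbabilityTheory Finset Real

theorem Finset.sum_abs_eq_two_mul_sum_filter_nonneg {ι : Type*} (s : Finset ι) {a : ι → ℝ}
    (h : ∑ i ∈ s, a i = 0) : ∑ i ∈ s, |a i| = 2 * ∑ i ∈ s with 0 ≤ a i, a i := by
  have habs : ∀ i, |a i| = 2 * (if 0 ≤ a i then a i else 0) - a i := fun i => by
    split_ifs with hi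
    · rw [abs_of_nonneg hi]; ring
    · rw [abs_of_neg (not_le.1 hi)]; ring
  simp only [habs, sum_sub_distrib, ← mul_sum, h, sum_filter, sub_zero]

theorem Finset.sum_indicator_comp_eq_sum_card_filter {ι α : Type*} [Fintype ι] [DecidableEq α]
    (f : ι → α) (A : Finset α) :
    ∑ i, (A : Set α).indicator (1 : α → ℝ) (f i) = ∑ a ∈ A, (#{i | f i = a} : ℝ) := by
  have hind : ∀ i, (A : Set α).indicator (1 : α → ℝ) (f i) = ∑ a ∈ A, if f i = a then 1 else 0 :=
    fun i => by simp [Set.indicator_apply]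
  simp only [hind]
  rw [sum_comm]
  simp [sum_boole]

theorem measureReal_sum_indicator_sub_ge_le {Ω α ι : Type*} [MeasurableSpace Ω]
    [MeasurableSpace α] [Fintype ι] {P : Measure Ω} [IsProbabilityMeasure P] {Y : ι → Ω → α}
    (hY : ∀ i, Measurable (Y i)) (hindep : iIndepFun Y P) {S : Set α} (hS : MeasurableSet S)
    {q : ℝ} (hq : ∀ i, P.real (Y i ⁻¹' S) = q) {ε : ℝ} (hε : 0 ≤ ε) :
    P.real {ω | ε ≤ ∑ i, (S.indicator 1 (Y i ω) - q)} ≤ exp (-2 * ε ^ 2 / Fintype.card ι) := by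
  have hsubG : ∀ i, HasSubgaussianMGF (fun ω ↦ S.indicator 1 (Y i ω) - q) (1 / 4) P := by
    intro i
    have hmean : P[(Y i ⁻¹' S).indicator 1] = q := by
      rw [integral_indicator_one (hY i hS), hq]
    have := hasSubgaussianMGF_of_mem_Icc (μ := P) (a := 0) (b := 1)
      (measurable_one.indicator (hY i hS)).aemeasurable
      (ae_of_all _ fun ω => ⟨Set.indicator_nonneg (fun _ _ => zero_le_one) ω,
        Set.indicator_le_self' (fun _ _ => zero_le_one) ω⟩)
    rw [hmean] at this
    convert this using 1
    · ext ω; by_cases h : Y i ω ∈ S <;> simp [h]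
    · norm_num
  have := HasSubgaussianMGF.measure_sum_ge_le_of_iIndepFun
    (hindep.comp (fun _ y => S.indicator 1 y - q)
      fun _ => (measurable_one.indicator hS).sub_const q)
    (s := univ) (fun i _ => hsubG i) hε
  refine this.trans_eq ?_
  push_cast
  rw [sum_const, card_univ, nsmul_eq_mul]
  congr 1
  ring

theorem exists_finset_card_mul_half_le_sum_indicator_sub {ι α : Type*} [Fintype ι] [Nonempty ι]
    [Fintype α] [DecidableEq α] (y : ι → α) {p : α → ℝ} (hp : ∑ a, p a = 1) {r : ℝ}
    (hr : r ≤ ∑ a, |(#{i | y i = a} : ℝ) / Fintype.card ι - p a|) :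
    ∃ A : Finset α,
      Fintype.card ι * r / 2 ≤ ∑ i, ((A : Set α).indicator 1 (y i) - ∑ a ∈ A, p a) := by
  set n : ℝ := (Fintype.card ι : ℝ)
  have hn : 0 < n := by positivity
  have hcount : ∀ A : Finset α,
      ∑ i, ((A : Set α).indicator 1 (y i) - ∑ a ∈ A, p a)
        = n * ∑ a ∈ A, ((#{i | y i = a} : ℝ) / n - p a) := by
    intro A
    rw [sum_sub_distrib, sum_indicator_comp_eq_sum_card_filter, sum_const, card_univ,
      nsmul_eq_mul, sum_sub_distrib, ← sum_div, mul_sub, mul_div_cancel₀ _ hn.ne']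
  have hsum : ∑ a, ((#{i | y i = a} : ℝ) / n - p a) = 0 := by
    have h := hcount univ
    simp only [coe_univ, Set.indicator_univ, Pi.one_apply, hp, sub_self, sum_const_zero] at h
    exact (mul_eq_zero.1 h.symm).resolve_left hn.ne'
  refine ⟨({a | 0 ≤ (#{i | y i = a} : ℝ) / n - p a} : Finset α), ?_⟩
  rw [sum_abs_eq_two_mul_sum_filter_nonneg univ hsum] at hr
  rw [hcount]
  nlinarith

/-- Bretagnolle–Huber–Carol inequality: if `(X_1,...,X_K)` is multinomially distributed
with parameters `m` and `p_1,...,p_K` (realized as the vector of category counts of `m`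
i.i.d. categorical samples `Y_1,...,Y_m` with `P(Y_j = k) = p_k`), then for any `Mbar > 0`,
`P(∑_k |X_k/m − p_k| ≥ Mbar) ≤ 2^K exp(−m Mbar²/2)`. -/
theorem bretagnolle_huber_carol
    {Ω : Type*} [MeasurableSpace Ω] (P : Measure Ω) [IsProbabilityMeasure P]
    (K m : ℕ) (p : Fin K → ℝ) (hp : ∀ k, 0 ≤ p k) (hpsum : ∑ k, p k = 1)
    (Y : Fin m → Ω → Fin K) (hYmeas : ∀ j, Measurable (Y j))
    (hindep : iIndepFun Y P)
    (hdist : ∀ j k, P {ω | Y j ω = k} = ENNReal.ofReal (p k))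
    (X : Fin K → Ω → ℝ)
    (hX : ∀ k ω, X k ω = ((Finset.univ.filter (fun j => Y j ω = k)).card : ℝ))
    (Mbar : ℝ) (hM : 0 < Mbar) :
    P {ω | Mbar ≤ ∑ k, |X k ω / m - p k|}
      ≤ ENNReal.ofReal (2 ^ K * Real.exp (-(m : ℝ) * Mbar ^ 2 / 2)) := by
  rcases m.eq_zero_or_pos with rfl | hm
  · refine prob_le_one.trans ?_
    simp [one_le_pow₀]
  have : Nonempty (Fin m) := ⟨⟨0, hm⟩⟩
  set E : Finset (Fin K) → Set Ω := fun A =>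
    {ω | m * Mbar / 2 ≤ ∑ j, ((A : Set (Fin K)).indicator 1 (Y j ω) - ∑ k ∈ A, p k)}
  have hcover : {ω | Mbar ≤ ∑ k, |X k ω / m - p k|} ⊆ ⋃ A, E A := fun ω hω => by
    simpa [E, hX] using exists_finset_card_mul_half_le_sum_indicator_sub (fun j => Y j ω)
      hpsum (r := Mbar) (by simpa [hX] using hω)
  have hE : ∀ A, P (E A) ≤ ENNReal.ofReal (exp (-(m : ℝ) * Mbar ^ 2 / 2)) := by
    intro A
    have hq : ∀ j, P.real (Y j ⁻¹' A) = ∑ k ∈ A, p k := fun j => by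
      rw [← sum_measureReal_preimage_singleton A fun k _ => hYmeas j (measurableSet_singleton k)]
      exact sum_congr rfl fun k _ => by
        rw [measureReal_def, show Y j ⁻¹' {k} = {ω | Y j ω = k} from rfl, hdist,
          ENNReal.toReal_ofReal (hp k)]
    rw [← ofReal_measureReal]
    refine ENNReal.ofReal_le_ofReal ((measureReal_sum_indicator_sub_ge_le hYmeas hindep
      A.measurableSet hq (by positivity)).trans_eq ?_)
    rw [Fintype.card_fin]
    congr 1
    field_simp
  calc P {ω | Mbar ≤ ∑ k, |X k ω / m - p k|} ≤ P (⋃ A, E A) := measure_mono hcover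
    _ ≤ ∑ A, P (E A) := measure_iUnion_fintype_le _ _
    _ ≤ ∑ _A : Finset (Fin K), ENNReal.ofReal (exp (-(m : ℝ) * Mbar ^ 2 / 2)) :=
      sum_le_sum fun A _ => hE A
    _ = ENNReal.ofReal (2 ^ K * Real.exp (-(m : ℝ) * Mbar ^ 2 / 2)) := by
      rw [sum_const, card_univ, Fintype.card_finset, Fintype.card_fin, nsmul_eq_mul,
        ENNReal.ofReal_mul (by positivity), ENNReal.ofReal_pow zero_le_two]
      norm_num
end

section
/- Let ρ be a probability measure on G, {G_k}_{k=1}^K a finite measurable partition, φ : G → ℝ bounded with |φ| ≤ M, and g_1,...,g_n i.i.d. ∼ ρ. Define ω = (1/n)∑_{k: I_k≠∅} |I_k|·((1/|I_k|)∑_{i∈I_k}φ(g_i) − E[φ | g∈G_k]). Then for any δ > 0, with probability at least 1 − δ: E_{g∼ρ}[φ(g)] ≥ (1/n)∑_{i=1}^n φ(g_i) − M·√(2·K·ln(2/δ)/n) − ω. -/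
/-!
Let `f` be the function equal on each cell `G_k` to the cell average `E[φ | g ∈ G_k]`. It has
the same mean as `φ`, satisfies `|f| ≤ M`, and the empirical mean of `φ` minus the deviation term
`w` is exactly the empirical mean of `f`, since on each cell `w` removes the gap between `φ(g_i)`
and the cell average. Hoeffding's inequality for the bounded i.i.d. variables `f(g_i)` then gives
the bound at confidence level `δ' = (δ/2)^K ≤ δ`, for which `log (1/δ') = K log (2/δ)`.
-/

open MeasureTheory ProbabilityTheory Finset Real Function

section CellwiseConst

variable {ι G : Type*} [Fintype ι] {Gk : ι → Set G}

noncomputable def cellwiseConst (Gk : ι → Set G) (c : ι → ℝ) (x : G) : ℝ :=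
  ∑ k, (Gk k).indicator (fun _ => c k) x

lemma cellwiseConst_of_mem (hdisj : Pairwise (Disjoint on Gk)) (c : ι → ℝ) {k : ι} {x : G}
    (hx : x ∈ Gk k) : cellwiseConst Gk c x = c k := by
  rw [cellwiseConst, Finset.sum_eq_single k]
  · exact Set.indicator_of_mem hx _
  · exact fun j _ hjk => Set.indicator_of_notMem (Set.disjoint_left.1 (hdisj hjk) · hx) _
  · simp

lemma cellwiseConst_const (hdisj : Pairwise (Disjoint on Gk)) (hcover : ⋃ k, Gk k = Set.univ)
    (a : ℝ) (x : G) : cellwiseConst Gk (fun _ => a) x = a :=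
  (Set.iUnion_eq_univ_iff.1 hcover x).elim fun _ hx => cellwiseConst_of_mem hdisj _ hx

lemma abs_cellwiseConst_le (hdisj : Pairwise (Disjoint on Gk)) (hcover : ⋃ k, Gk k = Set.univ)
    {c : ι → ℝ} {M : ℝ} (hc : ∀ k, |c k| ≤ M) (x : G) : |cellwiseConst Gk c x| ≤ M :=
  (Set.iUnion_eq_univ_iff.1 hcover x).elim fun k hx => cellwiseConst_of_mem hdisj c hx ▸ hc k

lemma sum_sum_cells_eq_sum {α : Type*} [Fintype α] (hdisj : Pairwise (Disjoint on Gk))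
    (hcover : ⋃ k, Gk k = Set.univ) (x : α → G) (I : ι → Finset α)
    (hI : ∀ k i, i ∈ I k ↔ x i ∈ Gk k) (v : α → ℝ) :
    ∑ k, ∑ i ∈ I k, v i = ∑ i, v i := by
  calc ∑ k, ∑ i ∈ I k, v i = ∑ k, ∑ i, (Gk k).indicator (fun _ => v i) (x i) := by
        classical
        refine sum_congr rfl fun k _ => ?_
        simp only [Set.indicator_apply, ← hI]
        rw [sum_ite_mem, univ_inter]
    _ = ∑ i, cellwiseConst Gk (fun _ => v i) (x i) := Finset.sum_comm
    _ = ∑ i, v i := sum_congr rfl fun i _ => cellwiseConst_const hdisj hcover _ _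

lemma card_mul_mean_sub_eq_sum_sub {α : Type*} (s : Finset α) (u : α → ℝ) (c : ℝ) :
    (#s : ℝ) * ((1 / #s) * ∑ i ∈ s, u i - c) = ∑ i ∈ s, (u i - c) := by
  rcases s.eq_empty_or_nonempty with rfl | hs
  · simp
  · rw [sum_sub_distrib, sum_const, nsmul_eq_mul, mul_sub, ← mul_assoc,
      mul_one_div_cancel (by positivity), one_mul]

lemma sum_card_mul_mean_sub_eq {α : Type*} [Fintype α] (hdisj : Pairwise (Disjoint on Gk))
    (hcover : ⋃ k, Gk k = Set.univ) (x : α → G) (I : ι → Finset α)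
    (hI : ∀ k i, i ∈ I k ↔ x i ∈ Gk k) (u : α → ℝ) (c : ι → ℝ) :
    ∑ k, (#(I k) : ℝ) * ((1 / #(I k)) * ∑ i ∈ I k, u i - c k) =
      ∑ i, u i - ∑ i, cellwiseConst Gk c (x i) := by
  calc _ = ∑ k, ∑ i ∈ I k, (u i - cellwiseConst Gk c (x i)) := by
        refine sum_congr rfl fun k _ => ?_
        rw [card_mul_mean_sub_eq_sum_sub]
        exact sum_congr rfl fun i hi => by rw [cellwiseConst_of_mem hdisj c ((hI k i).1 hi)]
    _ = _ := by rw [sum_sum_cells_eq_sum hdisj hcover x I hI, sum_sub_distrib]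

variable [MeasurableSpace G]

lemma measurable_cellwiseConst (hmeas : ∀ k, MeasurableSet (Gk k)) (c : ι → ℝ) :
    Measurable (cellwiseConst Gk c) :=
  Finset.measurable_sum _ fun k _ => measurable_const.indicator (hmeas k)

lemma integral_cellwiseConst {ρ : Measure G} [IsFiniteMeasure ρ]
    (hmeas : ∀ k, MeasurableSet (Gk k)) (c : ι → ℝ) :
    ∫ x, cellwiseConst Gk c x ∂ρ = ∑ k, c k * ρ.real (Gk k) := by
  unfold cellwiseConst
  rw [integral_finsetSum _ fun k _ => (integrable_const (c k)).indicator (hmeas k)]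
  refine sum_congr rfl fun k _ => ?_
  rw [integral_indicator_const _ (hmeas k), smul_eq_mul, mul_comm]

end CellwiseConst

section SetAverage

variable {G : Type*} [MeasurableSpace G] {ρ : Measure G} [IsFiniteMeasure ρ]

lemma abs_setIntegral_div_le {φ : G → ℝ} {M : ℝ} (hM0 : 0 ≤ M) (hM : ∀ x, |φ x| ≤ M)
    (s : Set G) : |(∫ x in s, φ x ∂ρ) / ρ.real s| ≤ M := by
  rcases (measureReal_nonneg (μ := ρ) (s := s)).eq_or_lt with hs | hs
  · simpa [← hs] using hM0
  rw [abs_div, abs_of_pos hs, div_le_iff₀ hs]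
  exact norm_setIntegral_le_of_norm_le_const (measure_lt_top ρ s) fun x _ =>
    (norm_eq_abs _).trans_le (hM x)

lemma setIntegral_div_measureReal_mul (φ : G → ℝ) (s : Set G) :
    (∫ x in s, φ x ∂ρ) / ρ.real s * ρ.real s = ∫ x in s, φ x ∂ρ := by
  rcases eq_or_ne (ρ.real s) 0 with hs | hs
  · rw [hs, mul_zero, setIntegral_measure_zero _ ((measureReal_eq_zero_iff).1 hs)]
  · exact div_mul_cancel₀ _ hs

lemma integral_cellwiseConst_setAverage {ι : Type*} [Fintype ι] {Gk : ι → Set G}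
    (hmeas : ∀ k, MeasurableSet (Gk k)) (hdisj : Pairwise (Disjoint on Gk))
    (hcover : ⋃ k, Gk k = Set.univ) {φ : G → ℝ} (hφ : Integrable φ ρ) :
    ∫ x, cellwiseConst Gk (fun k => (∫ y in Gk k, φ y ∂ρ) / ρ.real (Gk k)) x ∂ρ =
      ∫ x, φ x ∂ρ := by
  rw [integral_cellwiseConst hmeas, ← setIntegral_univ, ← hcover,
    integral_iUnion_fintype hmeas hdisj fun k => hφ.integrableOn]
  exact sum_congr rfl fun k _ => setIntegral_div_measureReal_mul φ (Gk k)

end SetAverage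

section Hoeffding

variable {Ω : Type*} [MeasurableSpace Ω] {P : Measure Ω} [IsProbabilityMeasure P]

lemma ofReal_one_sub_le_of_measureReal_not_le {p : Ω → Prop} {δ : ℝ}
    (h : P.real {ω | ¬ p ω} ≤ δ) : ENNReal.ofReal (1 - δ) ≤ P {ω | p ω} := by
  refine ENNReal.ofReal_le_of_le_toReal ?_
  have hunion : {ω | p ω} ∪ {ω | ¬ p ω} = Set.univ := Set.union_compl_self _
  have := measureReal_union_le (μ := P) {ω | p ω} {ω | ¬ p ω}
  rw [hunion, probReal_univ] at this
  change 1 - δ ≤ P.real {ω | p ω}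
  linarith

lemma measureReal_add_le_mean_le_exp {n : ℕ} {X : Fin n → Ω → ℝ} (hindep : iIndepFun X P)
    (hmeas : ∀ i, Measurable (X i)) {m M : ℝ} (hmean : ∀ i, P[X i] = m)
    (hM : ∀ i ω, |X i ω| ≤ M) {t : ℝ} (ht : 0 ≤ t) :
    P.real {ω | m + t ≤ (1 / n) * ∑ i, X i ω} ≤ exp (-(n * t ^ 2) / (2 * M ^ 2)) := by
  rcases n.eq_zero_or_pos with rfl | hn
  · simp
  have hsubG : ∀ i ∈ (univ : Finset (Fin n)),
      HasSubgaussianMGF (fun ω => X i ω - m) ((‖M - -M‖₊ / 2) ^ 2) P := fun i _ =>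
    hmean i ▸ hasSubgaussianMGF_of_mem_Icc (hmeas i).aemeasurable
      (ae_of_all _ fun ω => abs_le.1 (hM i ω))
  have hcentered : iIndepFun (fun i ω => X i ω - m) P :=
    hindep.comp (fun _ x => x - m) fun _ => measurable_id.sub_const _
  have hhoeffding := HasSubgaussianMGF.measure_sum_ge_le_of_iIndepFun hcentered hsubG
    (mul_nonneg n.cast_nonneg ht)
  have hparam : ((∑ _i : Fin n, (‖M - -M‖₊ / 2) ^ 2 : NNReal) : ℝ) = n * M ^ 2 := by
    simp [← two_mul]
  have hn' : (n : ℝ) ≠ 0 := by positivity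
  calc P.real {ω | m + t ≤ (1 / n) * ∑ i, X i ω}
      ≤ P.real {ω | n * t ≤ ∑ i, (X i ω - m)} := by
        refine measureReal_mono fun ω hω => ?_
        have := mul_le_mul_of_nonneg_left hω (n.cast_nonneg (α := ℝ))
        rw [← mul_assoc, mul_one_div_cancel hn', one_mul] at this
        simp only [Set.mem_ofPred_eq, sum_sub_distrib, sum_const, card_univ, Fintype.card_fin,
          nsmul_eq_mul]
        linarith
    _ ≤ exp (-(n * t) ^ 2 / (2 * (n * M ^ 2))) := hparam ▸ hhoeffding
    _ = exp (-(n * t ^ 2) / (2 * M ^ 2)) := by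
        congr 1
        rw [show (n * t) ^ 2 = n * (n * t ^ 2) by ring,
          show 2 * (n * M ^ 2) = n * (2 * M ^ 2) by ring, ← mul_neg, mul_div_mul_left _ _ hn']

lemma ofReal_one_sub_le_measure_mean_sub_le {n : ℕ} (hn : 0 < n) {X : Fin n → Ω → ℝ}
    (hindep : iIndepFun X P) (hmeas : ∀ i, Measurable (X i)) {m M : ℝ}
    (hmean : ∀ i, P[X i] = m) (hM : ∀ i ω, |X i ω| ≤ M) {δ : ℝ} (hδ : 0 < δ) :
    ENNReal.ofReal (1 - δ) ≤
      P {ω | (1 / n) * ∑ i, X i ω - M * √(2 * log (1 / δ) / n) ≤ m} := by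
  obtain ⟨ω₀⟩ := nonempty_of_isProbabilityMeasure P
  apply ofReal_one_sub_le_of_measureReal_not_le
  rcases ((abs_nonneg _).trans (hM ⟨0, hn⟩ ω₀)).eq_or_lt with rfl | hMpos
  · have hX : ∀ i ω, X i ω = 0 := fun i ω => abs_nonpos_iff.1 (hM i ω)
    have hm : m = 0 := by simp [← hmean ⟨0, hn⟩, hX]
    simp [hX, hm, hδ.le]
  rcases le_or_gt 1 δ with hδ1 | hδ1
  · exact measureReal_le_one.trans hδ1
  have hL : 0 ≤ log (1 / δ) := log_nonneg (by rw [le_div_iff₀ hδ]; linarith)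
  have hn' : (0 : ℝ) < n := by positivity
  calc P.real {ω | ¬ (1 / n) * ∑ i, X i ω - M * √(2 * log (1 / δ) / n) ≤ m}
      ≤ P.real {ω | m + M * √(2 * log (1 / δ) / n) ≤ (1 / n) * ∑ i, X i ω} :=
        measureReal_mono fun ω hω => by
          simp only [Set.mem_ofPred_eq, not_le] at hω ⊢
          linarith
    _ ≤ exp (-(n * (M * √(2 * log (1 / δ) / n)) ^ 2) / (2 * M ^ 2)) :=
        measureReal_add_le_mean_le_exp hindep hmeas hmean hM (by positivity)
    _ = δ := by
        rw [mul_pow, sq_sqrt (by positivity), one_div, log_inv]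
        field_simp
        exact exp_log hδ

end Hoeffding

/-- Theorem 1 of the paper (identity-map case): with probability at least `1 − δ`,
the expected return over unseen goals is lower bounded by the empirical average of
returns over the `n` i.i.d. training goals minus the concentration penalty
`M √(2 K ln(2/δ)/n)` minus the within-cell deviation term `ω`. -/
theorem expected_return_lower_bound_id
    {G : Type*} [MeasurableSpace G] (ρ : Measure G) [IsProbabilityMeasure ρ]
    {Ω : Type*} [MeasurableSpace Ω] (P : Measure Ω) [IsProbabilityMeasure P]
    (K : ℕ) (Gk : Fin K → Set G) (hmeas : ∀ k, MeasurableSet (Gk k))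
    (hdisj : Pairwise (Function.onFun Disjoint Gk)) (hcover : (⋃ k, Gk k) = Set.univ)
    (φ : G → ℝ) (hφ : Integrable φ ρ) (M : ℝ) (hM : ∀ x, |φ x| ≤ M)
    (n : ℕ) (hn : 0 < n) (g : Fin n → Ω → G) (hgmeas : ∀ i, Measurable (g i))
    (hindep : iIndepFun g P)
    (hdist : ∀ i, Measure.map (g i) P = ρ)
    (I : Fin K → Ω → Finset (Fin n)) (hI : ∀ k ω i, i ∈ I k ω ↔ g i ω ∈ Gk k)
    (condE : Fin K → ℝ)
    (hcondE : ∀ k, condE k = (∫ x in Gk k, φ x ∂ρ) / (ρ (Gk k)).toReal)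
    (w : Ω → ℝ)
    (hw : ∀ ω, w ω = (1 / (n : ℝ)) * ∑ k, ((I k ω).card : ℝ) *
        ((1 / ((I k ω).card : ℝ)) * ∑ i ∈ I k ω, φ (g i ω) - condE k))
    (δ : ℝ) (hδ : 0 < δ) :
    ENNReal.ofReal (1 - δ) ≤
      P {ω | (1 / (n : ℝ)) * ∑ i, φ (g i ω)
              - M * Real.sqrt (2 * K * Real.log (2 / δ) / n) - w ω
            ≤ ∫ x, φ x ∂ρ} := by
  obtain ⟨x₀⟩ := nonempty_of_isProbabilityMeasure ρ
  have hM0 : 0 ≤ M := (abs_nonneg _).trans (hM x₀)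
  have hK : 0 < K := Fin.pos_iff_nonempty.2 ⟨(Set.iUnion_eq_univ_iff.1 hcover x₀).choose⟩
  rcases le_or_gt 1 δ with hδ1 | hδ1
  · simp [ENNReal.ofReal_of_nonpos (sub_nonpos.2 hδ1)]
  obtain rfl : condE = fun k => (∫ x in Gk k, φ x ∂ρ) / ρ.real (Gk k) := funext hcondE
  set f := cellwiseConst Gk fun k => (∫ x in Gk k, φ x ∂ρ) / ρ.real (Gk k)
  have hf_meas : Measurable f := measurable_cellwiseConst hmeas _
  have hf_mean : ∀ i, P[fun ω => f (g i ω)] = ∫ x, φ x ∂ρ := fun i => calc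
    _ = ∫ x, f x ∂ρ := by
      rw [← hdist i, integral_map (hgmeas i).aemeasurable hf_meas.aestronglyMeasurable]
    _ = _ := integral_cellwiseConst_setAverage hmeas hdisj hcover hφ
  have hf_bound : ∀ i ω, |f (g i ω)| ≤ M := fun i ω =>
    abs_cellwiseConst_le hdisj hcover (fun k => abs_setIntegral_div_le hM0 hM (Gk k)) _
  have hempirical :
      ∀ ω, (1 / (n : ℝ)) * ∑ i, φ (g i ω) - w ω = (1 / n) * ∑ i, f (g i ω) := fun ω => by
    rw [hw, sum_card_mul_mean_sub_eq hdisj hcover (g · ω) (I · ω) fun k i => hI k ω i]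
    ring
  have hlog : log (1 / (δ / 2) ^ K) = K * log (2 / δ) := by
    rw [one_div, log_inv, log_pow, ← inv_div, log_inv, mul_neg, neg_neg]
  have hδK : (δ / 2) ^ K ≤ δ :=
    (pow_le_of_le_one (by positivity) (by linarith) hK.ne').trans (by linarith)
  calc ENNReal.ofReal (1 - δ) ≤ ENNReal.ofReal (1 - (δ / 2) ^ K) :=
        ENNReal.ofReal_le_ofReal (by linarith)
    _ ≤ P {ω | (1 / n) * ∑ i, f (g i ω) - M * √(2 * log (1 / (δ / 2) ^ K) / n)
          ≤ ∫ x, φ x ∂ρ} :=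
        ofReal_one_sub_le_measure_mean_sub_le hn (hindep.comp (fun _ => f) fun _ => hf_meas)
          (fun i => hf_meas.comp (hgmeas i)) hf_mean hf_bound (by positivity)
    _ ≤ _ := measure_mono fun ω hω => by
        simp only [Set.mem_ofPred_eq, hlog, ← mul_assoc] at hω ⊢
        linarith [hempirical ω]
end

section
/- Under the hypotheses of the uniform law of large numbers within each cell (Θ compact, φ_θ continuous in θ for a.e. g, dominated by integrable χ, finitely many cells G_k each with ρ(G_k) > 0 among those that receive samples), sup_{θ∈Θ} |ω_n(θ)| → 0 in probability as n → ∞, where ω_n(θ) = (1/n)∑_{k: I_k≠∅} |I_k|·((1/|I_k|)∑_{i∈I_k}φ_θ(g_i) − E_ρ[φ_θ|G_k]). -/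
/-!
Since `|I_k| · ((1/|I_k|) ∑_{i ∈ I_k} φ_θ(g_i) - c) = ∑_{i ∈ I_k} φ_θ(g_i) - |I_k| c` (also for
`I_k = ∅`) and the cells partition the sample, `ω_n(θ)` is the deviation of the empirical mean of
`φ_θ` from `E φ_θ = ∑_k ρ(G_k) E[φ_θ | G_k]` plus `∑_k (ρ(G_k) - |I_k|/n) E[φ_θ | G_k]`. The first
term tends to `0` uniformly on `Θ` almost surely (uniform strong law: bracket `φ_θ` near each
centre of a finite cover of `Θ` by a local oscillation of small integral), the second because
`|I_k|/n → ρ(G_k)` almost surely and `|E[φ_θ | G_k]| ≤ E χ / ρ(G_k)`. The supremum over `Θ` need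
not be measurable; almost surely it is dominated by the supremum over a countable dense subset,
which is measurable and tends to `0` almost surely, hence in probability.
-/

open MeasureTheory ProbabilityTheory Filter Finset Topology

section EmpiricalMean

variable {G Ω : Type*}

noncomputable def empiricalMean (f : G → ℝ) (x : ℕ → G) (n : ℕ) : ℝ :=
  (∑ i ∈ range n, f (x i)) / n

lemma empiricalMean_sub (f f₀ : G → ℝ) (x : ℕ → G) (n : ℕ) :
    empiricalMean (fun y => f y - f₀ y) x n = empiricalMean f x n - empiricalMean f₀ x n := by
  simp only [empiricalMean, sum_sub_distrib, sub_div]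

lemma abs_empiricalMean_le {f H : G → ℝ} {x : ℕ → G} (hx : ∀ i, |f (x i)| ≤ H (x i)) (n : ℕ) :
    |empiricalMean f x n| ≤ empiricalMean H x n := by
  rw [empiricalMean, empiricalMean, abs_div, Nat.abs_cast]
  gcongr
  exact (abs_sum_le_sum_abs _ _).trans (sum_le_sum fun i _ => hx i)

lemma abs_empiricalMean_sub_le {f f₀ H : G → ℝ} {x : ℕ → G}
    (hx : ∀ i, |f (x i) - f₀ (x i)| ≤ H (x i)) (n : ℕ) :
    |empiricalMean f x n - empiricalMean f₀ x n| ≤ empiricalMean H x n := by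
  rw [← empiricalMean_sub]
  exact abs_empiricalMean_le hx n

lemma card_div_eq_empiricalMean_indicator {A : Set G} {x : ℕ → G} {n : ℕ} {J : Finset ℕ}
    (hJ : ∀ i, i ∈ J ↔ i < n ∧ x i ∈ A) :
    (#J : ℝ) / n = empiricalMean (A.indicator 1) x n := by
  classical
  have hJ' : J = {i ∈ range n | x i ∈ A} := by ext i; simp [hJ]
  rw [hJ', card_filter, empiricalMean]
  push_cast
  simp only [Set.indicator_apply, Pi.one_apply]

variable [MeasurableSpace G] [MeasurableSpace Ω]

lemma measurable_empiricalMean {f : G → ℝ} (hf : Measurable f) {g : ℕ → Ω → G}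
    (hg : ∀ i, Measurable (g i)) (n : ℕ) :
    Measurable fun ω => empiricalMean f (g · ω) n :=
  (measurable_sum _ fun i _ => hf.comp (hg i)).div_const _

theorem ae_tendsto_empiricalMean {ρ : Measure G} {P : Measure Ω} {g : ℕ → Ω → G}
    (hg : ∀ i, AEMeasurable (g i) P) (hindep : Pairwise fun i j => IndepFun (g i) (g j) P)
    (hdist : ∀ i, P.map (g i) = ρ) {f : G → ℝ} (hf : Measurable f) (hfρ : Integrable f ρ) :
    ∀ᵐ ω ∂P, Tendsto (empiricalMean f (g · ω)) atTop (𝓝 (∫ x, f x ∂ρ)) := by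
  have hident (i : ℕ) : IdentDistrib (f ∘ g i) (f ∘ g 0) P P :=
    IdentDistrib.comp ⟨hg i, hg 0, by rw [hdist i, hdist 0]⟩ hf
  have hint : Integrable (f ∘ g 0) P := by
    rw [← hdist 0] at hfρ
    exact (integrable_map_measure hf.aestronglyMeasurable (hg 0)).mp hfρ
  have hmean : ∫ ω, (f ∘ g 0) ω ∂P = ∫ x, f x ∂ρ := by
    rw [← hdist 0, integral_map (hg 0) hf.aestronglyMeasurable]; rfl
  rw [← hmean]
  exact strong_law_ae_real (fun i => f ∘ g i) hint (fun i j hij => (hindep hij).comp hf hf) hident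

theorem ae_tendsto_empiricalMean_indicator {ρ : Measure G} [IsFiniteMeasure ρ] {P : Measure Ω}
    {g : ℕ → Ω → G}
    (hg : ∀ i, AEMeasurable (g i) P) (hindep : Pairwise fun i j => IndepFun (g i) (g j) P)
    (hdist : ∀ i, P.map (g i) = ρ) {A : Set G} (hA : MeasurableSet A) :
    ∀ᵐ ω ∂P, Tendsto (empiricalMean (A.indicator 1) (g · ω)) atTop (𝓝 (ρ A).toReal) := by
  have h := ae_tendsto_empiricalMean (f := A.indicator 1) hg hindep hdist
    (measurable_const.indicator hA) ((integrable_const 1).indicator hA)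
  rwa [integral_indicator_one hA] at h

end EmpiricalMean

lemma le_ciSup_of_mem_closure {E : Type*} [TopologicalSpace E] {f : E → ℝ} {S T : Set E}
    (hf : ContinuousOn f S) (hTS : T ⊆ S) (hbdd : BddAbove (Set.range fun t : T => f t))
    {θ : E} (hθS : θ ∈ S) (hθT : θ ∈ closure T) : f θ ≤ ⨆ t : T, f t := by
  have hmem := ((hf θ hθS).mono hTS).mem_closure_image hθT
  refine closure_minimal ?_ isClosed_Iic hmem
  rintro _ ⟨t, ht, rfl⟩
  exact le_ciSup hbdd ⟨t, ht⟩

lemma TendstoUniformlyOn.tendsto_iSup_abs_sub {E ι : Type*} {l : Filter ι} {F : ι → E → ℝ}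
    {f : E → ℝ} {Θ T : Set E} (h : TendstoUniformlyOn F f l Θ) (hTΘ : T ⊆ Θ) :
    Tendsto (fun n => ⨆ t : T, |F n t - f t|) l (𝓝 0) := by
  rw [Metric.tendsto_nhds]
  intro η hη
  filter_upwards [Metric.tendstoUniformlyOn_iff.1 h (η / 2) (half_pos hη)] with n hn
  rw [Real.dist_eq, sub_zero, abs_of_nonneg (Real.iSup_nonneg fun _ => abs_nonneg _)]
  refine (Real.iSup_le (fun t => ?_) (half_pos hη).le).trans_lt (half_lt_self hη)
  rw [abs_sub_comm, ← Real.dist_eq]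
  exact (hn t (hTΘ t.2)).le

lemma tendsto_measure_le_iSup_of_ae_tendsto {Ω ι : Type*} [MeasurableSpace Ω] {P : Measure Ω}
    [IsFiniteMeasure P] {X : ι → ℕ → Ω → ℝ} {Y : ℕ → Ω → ℝ}
    (hY : ∀ n, AEStronglyMeasurable (Y n) P) (hYlim : ∀ᵐ ω ∂P, Tendsto (Y · ω) atTop (𝓝 0))
    (hXY : ∀ᵐ ω ∂P, ∀ n i, X i n ω ≤ Y n ω) {ε : ℝ} (hε : 0 < ε) :
    Tendsto (fun n => P {ω | ε ≤ ⨆ i, X i n ω}) atTop (𝓝 0) := by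
  have hconv := tendstoInMeasure_iff_dist.1 (tendstoInMeasure_of_tendsto_ae hY hYlim) ε hε
  refine tendsto_of_tendsto_of_tendsto_of_le_of_le tendsto_const_nhds hconv
    (fun _ => zero_le) fun n => measure_mono_ae ?_
  filter_upwards [hXY] with ω hω (hωε : ε ≤ ⨆ i, X i n ω)
  show ε ≤ dist (Y n ω) 0
  rw [Real.dist_0_eq_abs]
  rcases isEmpty_or_nonempty ι with hι | hι
  · rw [Real.iSup_of_isEmpty] at hωε
    linarith
  · exact (hωε.trans (ciSup_le (hω n))).trans (le_abs_self _)

section LocalOscillation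

variable {E G : Type*} [PseudoMetricSpace E]
  {φ : E → G → ℝ} {χ : G → ℝ} {Θ T : Set E} {θ₀ : E} {r : ℝ}

-- A supremum over the countable set `T`, hence measurable in `x`; for `T` dense in `Θ` it still
-- bounds `|φ θ x - φ θ₀ x|` on all of `Θ ∩ ball θ₀ r` when `φ · x` is continuous on `Θ`.
noncomputable def localOscillation (φ : E → G → ℝ) (T : Set E) (θ₀ : E) (r : ℝ) (x : G) : ℝ :=
  ⨆ t : ↥(T ∩ Metric.ball θ₀ r), |φ t x - φ θ₀ x|

lemma localOscillation_nonneg (x : G) : 0 ≤ localOscillation φ T θ₀ r x :=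
  Real.iSup_nonneg fun _ => abs_nonneg _

lemma abs_sub_le_two_mul {a b c : ℝ} (ha : |a| ≤ c) (hb : |b| ≤ c) : |a - b| ≤ 2 * c := by
  linarith [abs_sub a b]

lemma localOscillation_le (hTΘ : T ⊆ Θ) (hθ₀ : θ₀ ∈ Θ) (hdom : ∀ θ ∈ Θ, ∀ x, |φ θ x| ≤ χ x)
    (x : G) : localOscillation φ T θ₀ r x ≤ 2 * χ x :=
  Real.iSup_le (fun t => abs_sub_le_two_mul (hdom t (hTΘ t.2.1) x) (hdom θ₀ hθ₀ x))
    (by linarith [(abs_nonneg _).trans (hdom θ₀ hθ₀ x)])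

lemma abs_sub_le_localOscillation (hTΘ : T ⊆ Θ) (hΘT : Θ ⊆ closure T) (hθ₀ : θ₀ ∈ Θ)
    (hdom : ∀ θ ∈ Θ, ∀ x, |φ θ x| ≤ χ x) {x : G} (hx : ContinuousOn (φ · x) Θ) {θ : E}
    (hθ : θ ∈ Θ) (hθr : θ ∈ Metric.ball θ₀ r) :
    |φ θ x - φ θ₀ x| ≤ localOscillation φ T θ₀ r x := by
  refine le_ciSup_of_mem_closure (T := T ∩ Metric.ball θ₀ r) (f := fun θ => |φ θ x - φ θ₀ x|)
    ((hx.sub continuousOn_const).abs) (Set.inter_subset_left.trans hTΘ) ?_ hθ ?_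
  · exact ⟨2 * χ x, Set.forall_mem_range.2 fun t =>
      abs_sub_le_two_mul (hdom t (hTΘ t.2.1) x) (hdom θ₀ hθ₀ x)⟩
  · rw [Set.inter_comm]
    exact Metric.isOpen_ball.inter_closure ⟨hθr, hΘT hθ⟩

lemma tendsto_localOscillation_nhdsGT_zero (hTΘ : T ⊆ Θ) {x : G}
    (hx : ContinuousWithinAt (φ · x) Θ θ₀) :
    Tendsto (fun r => localOscillation φ T θ₀ r x) (𝓝[>] 0) (𝓝 0) := by
  rw [Metric.tendsto_nhds]
  intro η hη
  obtain ⟨δ, hδ, hφδ⟩ := Metric.continuousWithinAt_iff.1 hx (η / 2) (half_pos hη)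
  filter_upwards [Ioo_mem_nhdsGT hδ] with r hr
  rw [Real.dist_eq, sub_zero, abs_of_nonneg (localOscillation_nonneg x)]
  refine (Real.iSup_le (fun t => ?_) (half_pos hη).le).trans_lt (half_lt_self hη)
  have := hφδ (hTΘ t.2.1) ((Metric.mem_ball.1 t.2.2).trans hr.2)
  exact (Real.dist_eq _ _ ▸ this).le

variable [MeasurableSpace G]

lemma measurable_localOscillation (hT : T.Countable) (hφ : ∀ t ∈ T, Measurable (φ t))
    (hφ₀ : Measurable (φ θ₀)) : Measurable (localOscillation φ T θ₀ r) := by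
  have : Countable ↥(T ∩ Metric.ball θ₀ r) := (hT.mono Set.inter_subset_left).to_subtype
  exact Measurable.iSup fun t => ((hφ t t.2.1).sub hφ₀).abs

lemma integrable_localOscillation {ρ : Measure G} (hT : T.Countable) (hTΘ : T ⊆ Θ)
    (hθ₀ : θ₀ ∈ Θ) (hφ : ∀ θ ∈ Θ, Measurable (φ θ)) (hdom : ∀ θ ∈ Θ, ∀ x, |φ θ x| ≤ χ x)
    (hχ : Integrable χ ρ) : Integrable (localOscillation φ T θ₀ r) ρ :=
  (hχ.const_mul 2).mono'
    (measurable_localOscillation hT (fun t ht => hφ t (hTΘ ht)) (hφ θ₀ hθ₀)).aestronglyMeasurable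
    (ae_of_all _ fun x => by
      rw [Real.norm_eq_abs, abs_of_nonneg (localOscillation_nonneg x)]
      exact localOscillation_le hTΘ hθ₀ hdom x)

lemma exists_integral_localOscillation_lt {ρ : Measure G} (hT : T.Countable) (hTΘ : T ⊆ Θ)
    (hθ₀ : θ₀ ∈ Θ) (hcont : ∀ᵐ x ∂ρ, ContinuousOn (φ · x) Θ) (hφ : ∀ θ ∈ Θ, Measurable (φ θ))
    (hdom : ∀ θ ∈ Θ, ∀ x, |φ θ x| ≤ χ x) (hχ : Integrable χ ρ) {δ : ℝ} (hδ : 0 < δ) :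
    ∃ r > 0, ∫ x, localOscillation φ T θ₀ r x ∂ρ < δ := by
  have hlim : Tendsto (fun r => ∫ x, localOscillation φ T θ₀ r x ∂ρ) (𝓝[>] 0) (𝓝 0) := by
    have := tendsto_integral_filter_of_dominated_convergence (2 * χ ·)
      (Eventually.of_forall fun r => (integrable_localOscillation (r := r) hT hTΘ hθ₀ hφ hdom hχ).1)
      (Eventually.of_forall fun r => ae_of_all _ fun x => by
        rw [Real.norm_eq_abs, abs_of_nonneg (localOscillation_nonneg x)]
        exact localOscillation_le hTΘ hθ₀ hdom x)
      (hχ.const_mul 2)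
      (hcont.mono fun x hx => tendsto_localOscillation_nhdsGT_zero hTΘ (hx θ₀ hθ₀))
    rwa [integral_zero] at this
  obtain ⟨r, hrδ, hr⟩ := ((hlim.eventually (gt_mem_nhds hδ)).and self_mem_nhdsWithin).exists
  exact ⟨r, hr, hrδ⟩

end LocalOscillation

section UniformLaw

variable {E G Ω : Type*} [PseudoMetricSpace E] [MeasurableSpace G] [MeasurableSpace Ω]
  {ρ : Measure G} {P : Measure Ω} {g : ℕ → Ω → G}
  {φ : E → G → ℝ} {χ : G → ℝ} {Θ T : Set E}

lemma ae_forall_comp_of_ae (hg : ∀ i, AEMeasurable (g i) P) (hdist : ∀ i, P.map (g i) = ρ)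
    {p : G → Prop} (hp : ∀ᵐ x ∂ρ, p x) : ∀ᵐ ω ∂P, ∀ i, p (g i ω) :=
  ae_all_iff.2 fun i => ae_of_ae_map (hg i) (hdist i ▸ hp)

lemma abs_empiricalMean_sub_integral_le {f f₀ H : G → ℝ} (hf : Integrable f ρ)
    (hf₀ : Integrable f₀ ρ) (hH : Integrable H ρ) (hρ : ∀ᵐ y ∂ρ, |f y - f₀ y| ≤ H y)
    {x : ℕ → G} (hx : ∀ i, |f (x i) - f₀ (x i)| ≤ H (x i)) (n : ℕ) :
    |empiricalMean f x n - ∫ y, f y ∂ρ|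
      ≤ empiricalMean H x n + |empiricalMean f₀ x n - ∫ y, f₀ y ∂ρ| + ∫ y, H y ∂ρ := by
  have hint : |∫ y, f₀ y ∂ρ - ∫ y, f y ∂ρ| ≤ ∫ y, H y ∂ρ := by
    rw [abs_sub_comm, ← integral_sub hf hf₀]
    exact norm_integral_le_of_norm_le (f := fun y => f y - f₀ y) hH hρ
  linarith [abs_empiricalMean_sub_le hx n, abs_sub_le (empiricalMean f x n)
    (empiricalMean f₀ x n) (∫ y, f y ∂ρ), abs_sub_le (empiricalMean f₀ x n) (∫ y, f₀ y ∂ρ)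
    (∫ y, f y ∂ρ)]

lemma exists_finite_cover_integral_localOscillation_lt (hΘ : IsCompact Θ) (hT : T.Countable)
    (hTΘ : T ⊆ Θ) (hcont : ∀ᵐ x ∂ρ, ContinuousOn (φ · x) Θ) (hφ : ∀ θ ∈ Θ, Measurable (φ θ))
    (hdom : ∀ θ ∈ Θ, ∀ x, |φ θ x| ≤ χ x) (hχ : Integrable χ ρ) {δ : ℝ} (hδ : 0 < δ) :
    ∃ (s : Finset Θ) (r : Θ → ℝ), Θ ⊆ ⋃ (j : Θ) (_ : j ∈ s), Metric.ball (j : E) (r j) ∧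
      ∀ j : Θ, ∫ x, localOscillation φ T j (r j) x ∂ρ < δ := by
  choose r hr hrδ using fun j : Θ =>
    exists_integral_localOscillation_lt hT hTΘ j.2 hcont hφ hdom hχ hδ
  obtain ⟨s, hs⟩ := hΘ.elim_finite_subcover (fun j : Θ => Metric.ball (j : E) (r j))
    (fun _ => Metric.isOpen_ball) fun θ hθ =>
      Set.mem_iUnion.2 ⟨⟨θ, hθ⟩, Metric.mem_ball_self (hr _)⟩
  exact ⟨s, r, hs, hrδ⟩

variable (hcont : ∀ᵐ x ∂ρ, ContinuousOn (φ · x) Θ) (hφ : ∀ θ ∈ Θ, Measurable (φ θ))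
  (hdom : ∀ θ ∈ Θ, ∀ x, |φ θ x| ≤ χ x) (hχ : Integrable χ ρ)
  (hg : ∀ i, AEMeasurable (g i) P) (hdist : ∀ i, P.map (g i) = ρ)
include hcont hφ hdom hχ hg hdist

lemma ae_eventually_forall_abs_empiricalMean_sub_integral_lt (hΘ : IsCompact Θ)
    (hindep : Pairwise fun i j => IndepFun (g i) (g j) P) {δ : ℝ} (hδ : 0 < δ) :
    ∀ᵐ ω ∂P, ∀ᶠ n in atTop, ∀ θ ∈ Θ,
      |empiricalMean (φ θ) (g · ω) n - ∫ x, φ θ x ∂ρ| < δ := by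
  obtain ⟨T, hTΘ, hT, hΘT⟩ := hΘ.isSeparable.exists_countable_dense_subset
  obtain ⟨s, r, hs, hr⟩ := exists_finite_cover_integral_localOscillation_lt hΘ hT hTΘ hcont hφ
    hdom hχ (div_pos hδ three_pos)
  set H : Θ → G → ℝ := fun j => localOscillation φ T j (r j)
  have hφint (θ) (hθ : θ ∈ Θ) : Integrable (φ θ) ρ :=
    hχ.mono' (hφ θ hθ).aestronglyMeasurable (ae_of_all _ (hdom θ hθ))
  have hHint (j : Θ) : Integrable (H j) ρ := integrable_localOscillation hT hTΘ j.2 hφ hdom hχ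
  have hlim : ∀ᵐ ω ∂P, ∀ j ∈ (s : Set Θ),
      Tendsto (empiricalMean (φ j) (g · ω)) atTop (𝓝 (∫ x, φ j x ∂ρ)) ∧
      Tendsto (empiricalMean (H j) (g · ω)) atTop (𝓝 (∫ x, H j x ∂ρ)) :=
    (ae_ball_iff s.countable_toSet).2 fun j _ =>
      (ae_tendsto_empiricalMean hg hindep hdist (hφ j j.2) (hφint j j.2)).and
        (ae_tendsto_empiricalMean hg hindep hdist
          (measurable_localOscillation hT (fun t ht => hφ t (hTΘ ht)) (hφ j j.2)) (hHint j))
  filter_upwards [hlim, ae_forall_comp_of_ae hg hdist hcont] with ω hlimω hcontω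
  have hev : ∀ᶠ n in atTop, ∀ j ∈ s,
      |empiricalMean (φ j) (g · ω) n - ∫ x, φ j x ∂ρ| < δ / 3 ∧
      empiricalMean (H j) (g · ω) n < δ / 3 :=
    (eventually_all_finset s).2 fun j hj =>
      ((hlimω j hj).1.eventually (Metric.ball_mem_nhds _ (div_pos hδ three_pos))).and
        ((hlimω j hj).2.eventually (gt_mem_nhds (hr j)))
  filter_upwards [hev] with n hn θ hθ
  obtain ⟨j, hj, hθj⟩ := Set.mem_iUnion₂.1 (hs hθ)
  have hbracket := abs_empiricalMean_sub_integral_le (hφint θ hθ) (hφint j j.2) (hHint j)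
    (hcont.mono fun x hx => abs_sub_le_localOscillation hTΘ hΘT j.2 hdom hx hθ hθj)
    (fun i => abs_sub_le_localOscillation hTΘ hΘT j.2 hdom (hcontω i) hθ hθj) n
  linarith [hn j hj, hr j]

theorem ae_tendstoUniformlyOn_empiricalMean (hΘ : IsCompact Θ)
    (hindep : Pairwise fun i j => IndepFun (g i) (g j) P) :
    ∀ᵐ ω ∂P, TendstoUniformlyOn (fun n θ => empiricalMean (φ θ) (g · ω) n)
      (fun θ => ∫ x, φ θ x ∂ρ) atTop Θ := by
  have h := ae_all_iff.2 fun j : ℕ =>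
    ae_eventually_forall_abs_empiricalMean_sub_integral_lt hcont hφ hdom hχ hg hdist hΘ hindep
      (Nat.one_div_pos_of_nat (n := j))
  filter_upwards [h] with ω hω
  rw [Metric.tendstoUniformlyOn_iff]
  intro ε hε
  obtain ⟨j, hj⟩ := exists_nat_one_div_lt hε
  filter_upwards [hω j] with n hn θ hθ
  rw [dist_comm, Real.dist_eq]
  exact (hn θ hθ).trans hj

lemma ae_forall_abs_empiricalMean_sub_integral_le_iSup (hTΘ : T ⊆ Θ) (hΘT : Θ ⊆ closure T) :
    ∀ᵐ ω ∂P, ∀ n, ∀ θ ∈ Θ, |empiricalMean (φ θ) (g · ω) n - ∫ x, φ θ x ∂ρ|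
      ≤ ⨆ t : T, |empiricalMean (φ t) (g · ω) n - ∫ x, φ t x ∂ρ| := by
  filter_upwards [ae_forall_comp_of_ae hg hdist hcont] with ω hω n θ hθ
  refine le_ciSup_of_mem_closure
    (f := fun θ => |empiricalMean (φ θ) (g · ω) n - ∫ x, φ θ x ∂ρ|) ?_ hTΘ ?_ hθ (hΘT hθ)
  · refine (((continuousOn_finsetSum _ fun i _ => hω i).div_const _).sub ?_).abs
    exact continuousOn_of_dominated (fun θ hθ => (hφ θ hθ).aestronglyMeasurable)
      (fun θ hθ => ae_of_all _ (hdom θ hθ)) hχ hcont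
  · refine ⟨empiricalMean χ (g · ω) n + ∫ x, χ x ∂ρ, Set.forall_mem_range.2 fun t => ?_⟩
    have ht := hTΘ t.2
    have hint : |∫ x, φ t x ∂ρ| ≤ ∫ x, χ x ∂ρ :=
      norm_integral_le_of_norm_le (f := φ t) hχ (ae_of_all _ (hdom t ht))
    linarith [abs_sub (empiricalMean (φ t) (g · ω) n) (∫ x, φ t x ∂ρ),
      abs_empiricalMean_le (fun i => hdom t ht (g i ω)) n]

end UniformLaw

section Cells

variable {α ι K : Type*} [Fintype K] {A : K → Set α}

lemma sum_sum_eq_sum_of_partition (hdisj : Pairwise (Function.onFun Disjoint A))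
    (hcover : ⋃ k, A k = Set.univ) {s : Finset ι} {x : ι → α} {J : K → Finset ι}
    (hJ : ∀ k i, i ∈ J k ↔ i ∈ s ∧ x i ∈ A k) (F : ι → ℝ) :
    ∑ k, ∑ i ∈ J k, F i = ∑ i ∈ s, F i := by
  classical
  have hs : univ.biUnion J = s := by
    ext i
    simp only [mem_biUnion, mem_univ, true_and, hJ]
    exact ⟨fun ⟨_, h, _⟩ => h, fun h =>
      (Set.mem_iUnion.1 (hcover ▸ Set.mem_univ (x i))).imp fun _ hk => ⟨h, hk⟩⟩
  rw [← hs, sum_biUnion]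
  intro k _ l _ hkl
  exact Finset.disjoint_left.2 fun i hik hil =>
    Set.disjoint_left.1 (hdisj hkl) ((hJ k i).1 hik).2 ((hJ l i).1 hil).2

lemma card_mul_one_div_card_mul_sum_sub (s : Finset ι) (F : ι → ℝ) (c : ℝ) :
    (#s : ℝ) * ((1 / #s) * ∑ i ∈ s, F i - c) = ∑ i ∈ s, F i - #s * c := by
  rcases s.eq_empty_or_nonempty with rfl | hs
  · simp
  · have : (#s : ℝ) ≠ 0 := by exact_mod_cast hs.card_ne_zero
    field_simp

lemma one_div_mul_sum_card_mul_sub_eq (hdisj : Pairwise (Function.onFun Disjoint A))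
    (hcover : ⋃ k, A k = Set.univ) {x : ℕ → α} {n : ℕ} {J : K → Finset ℕ}
    (hJ : ∀ k i, i ∈ J k ↔ i < n ∧ x i ∈ A k) (f : α → ℝ) (c : K → ℝ) :
    (1 / (n : ℝ)) * ∑ k, (#(J k) : ℝ) * ((1 / (#(J k) : ℝ)) * ∑ i ∈ J k, f (x i) - c k)
      = empiricalMean f x n - ∑ k, empiricalMean ((A k).indicator 1) x n * c k := by
  have hJ' : ∀ k i, i ∈ J k ↔ i ∈ range n ∧ x i ∈ A k := by simpa only [mem_range] using hJ
  rw [sum_congr rfl fun k _ => card_mul_one_div_card_mul_sum_sub (J k) (fun i => f (x i)) (c k),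
    sum_sub_distrib, sum_sum_eq_sum_of_partition hdisj hcover hJ', mul_sub]
  congr 1
  · rw [empiricalMean]
    ring
  · rw [mul_sum]
    exact sum_congr rfl fun k _ => by rw [← card_div_eq_empiricalMean_indicator (hJ k)]; ring

variable [MeasurableSpace α] {ρ : Measure α}

-- No positivity of `ρ s` is needed: for a null set both sides vanish.
lemma measureReal_mul_setIntegral_div [IsFiniteMeasure ρ] (f : α → ℝ) (s : Set α) :
    (ρ s).toReal * ((∫ y in s, f y ∂ρ) / (ρ s).toReal) = ∫ y in s, f y ∂ρ := by
  rcases eq_or_ne (ρ s) 0 with h | h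
  · simp [setIntegral_measure_zero f h, h]
  · exact mul_div_cancel₀ _ (ENNReal.toReal_ne_zero.2 ⟨h, measure_ne_top ρ s⟩)

lemma integral_eq_sum_measureReal_mul_setIntegral_div [IsFiniteMeasure ρ]
    (hA : ∀ k, MeasurableSet (A k)) (hdisj : Pairwise (Function.onFun Disjoint A))
    (hcover : ⋃ k, A k = Set.univ) {f : α → ℝ} (hf : Integrable f ρ) :
    ∫ y, f y ∂ρ = ∑ k, (ρ (A k)).toReal * ((∫ y in A k, f y ∂ρ) / (ρ (A k)).toReal) := by
  simp only [measureReal_mul_setIntegral_div]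
  rw [← integral_iUnion_fintype hA hdisj fun k => hf.integrableOn, hcover, setIntegral_univ]

lemma abs_setIntegral_div_le_s12 {f χ : α → ℝ} (hfχ : ∀ y, |f y| ≤ χ y) (hχ : Integrable χ ρ)
    (s : Set α) : |(∫ y in s, f y ∂ρ) / (ρ s).toReal| ≤ (∫ y, χ y ∂ρ) / (ρ s).toReal := by
  rw [abs_div, ENNReal.abs_toReal]
  refine div_le_div_of_nonneg_right ?_ ENNReal.toReal_nonneg
  calc |∫ y in s, f y ∂ρ| ≤ ∫ y in s, χ y ∂ρ :=
        norm_integral_le_of_norm_le (f := f) hχ.integrableOn (ae_of_all _ hfχ)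
    _ ≤ ∫ y, χ y ∂ρ :=
        setIntegral_le_integral hχ (ae_of_all _ fun y => (abs_nonneg _).trans (hfχ y))

lemma abs_one_div_mul_sum_card_mul_sub_le [IsFiniteMeasure ρ] (hA : ∀ k, MeasurableSet (A k))
    (hdisj : Pairwise (Function.onFun Disjoint A)) (hcover : ⋃ k, A k = Set.univ)
    {f χ : α → ℝ} (hf : AEStronglyMeasurable f ρ) (hfχ : ∀ y, |f y| ≤ χ y)
    (hχ : Integrable χ ρ) {x : ℕ → α} {n : ℕ} {J : K → Finset ℕ}
    (hJ : ∀ k i, i ∈ J k ↔ i < n ∧ x i ∈ A k) :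
    |(1 / (n : ℝ)) * ∑ k, (#(J k) : ℝ) * ((1 / (#(J k) : ℝ)) * ∑ i ∈ J k, f (x i)
        - (∫ y in A k, f y ∂ρ) / (ρ (A k)).toReal)|
      ≤ |empiricalMean f x n - ∫ y, f y ∂ρ| + ∑ k, |empiricalMean ((A k).indicator 1) x n
        - (ρ (A k)).toReal| * ((∫ y, χ y ∂ρ) / (ρ (A k)).toReal) := by
  set c : K → ℝ := fun k => (∫ y in A k, f y ∂ρ) / (ρ (A k)).toReal
  set freq : K → ℝ := fun k => empiricalMean ((A k).indicator 1) x n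
  have hsplit : empiricalMean f x n - ∑ k, freq k * c k = (empiricalMean f x n - ∫ y, f y ∂ρ)
      + ∑ k, ((ρ (A k)).toReal - freq k) * c k := by
    rw [integral_eq_sum_measureReal_mul_setIntegral_div hA hdisj hcover
      (hχ.mono' hf (ae_of_all _ hfχ))]
    simp only [sub_mul, sum_sub_distrib]
    ring
  rw [one_div_mul_sum_card_mul_sub_eq hdisj hcover hJ, hsplit]
  refine (abs_add_le _ _).trans (add_le_add le_rfl ((abs_sum_le_sum_abs _ _).trans
    (sum_le_sum fun k _ => ?_)))
  rw [abs_mul, abs_sub_comm]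
  exact mul_le_mul_of_nonneg_left (abs_setIntegral_div_le_s12 hfχ hχ _) (abs_nonneg _)

end Cells

theorem omega_tendsto_zero_in_probability_general
    {G : Type*} [MeasurableSpace G] (ρ : Measure G) [IsProbabilityMeasure ρ]
    {Ω : Type*} [MeasurableSpace Ω] (P : Measure Ω) [IsProbabilityMeasure P]
    (m : ℕ) (Θ : Set (EuclideanSpace ℝ (Fin m))) (hΘ : IsCompact Θ)
    (φ : EuclideanSpace ℝ (Fin m) → G → ℝ)
    (hcont : ∀ᵐ x ∂ρ, ContinuousOn (fun θ => φ θ x) Θ)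
    (hφmeas : ∀ θ ∈ Θ, Measurable (φ θ))
    (χ : G → ℝ) (hdom : ∀ θ ∈ Θ, ∀ x, |φ θ x| ≤ χ x) (hχ : Integrable χ ρ)
    (K : ℕ) (Gk : Fin K → Set G) (hmeas : ∀ k, MeasurableSet (Gk k))
    (hdisj : Pairwise (Function.onFun Disjoint Gk)) (hcover : (⋃ k, Gk k) = Set.univ)
    (g : ℕ → Ω → G) (hgmeas : ∀ i, Measurable (g i))
    (hindep : iIndepFun g P)
    (hdist : ∀ i, Measure.map (g i) P = ρ)
    (I : Fin K → ℕ → Ω → Finset ℕ)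
    (hI : ∀ k n ω i, i ∈ I k n ω ↔ i < n ∧ g i ω ∈ Gk k)
    (condE : EuclideanSpace ℝ (Fin m) → Fin K → ℝ)
    (hcondE : ∀ θ k, condE θ k = (∫ x in Gk k, φ θ x ∂ρ) / (ρ (Gk k)).toReal)
    (w : EuclideanSpace ℝ (Fin m) → ℕ → Ω → ℝ)
    (hw : ∀ θ n ω, w θ n ω = (1 / (n : ℝ)) * ∑ k, ((I k n ω).card : ℝ) *
        ((1 / ((I k n ω).card : ℝ)) * ∑ i ∈ I k n ω, φ θ (g i ω) - condE θ k)) :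
    ∀ ε > (0 : ℝ), Tendsto
      (fun (n : ℕ) => P {ω | ε ≤ ⨆ θ : Θ, |w θ n ω|}) atTop (nhds 0) := by
  intro ε hε
  obtain ⟨T, hTΘ, hT, hΘT⟩ := hΘ.isSeparable.exists_countable_dense_subset
  have : Countable T := hT.to_subtype
  have hg (i : ℕ) : AEMeasurable (g i) P := (hgmeas i).aemeasurable
  have hpairwise : Pairwise fun i j => IndepFun (g i) (g j) P := fun _ _ hij => hindep.indepFun hij
  set D : ℕ → Ω → ℝ := fun n ω => ⨆ t : T, |empiricalMean (φ t) (g · ω) n - ∫ x, φ t x ∂ρ|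
  set V : ℕ → Ω → ℝ := fun n ω => ∑ k, |empiricalMean ((Gk k).indicator 1) (g · ω) n
    - (ρ (Gk k)).toReal| * ((∫ x, χ x ∂ρ) / (ρ (Gk k)).toReal)
  refine tendsto_measure_le_iSup_of_ae_tendsto (P := P) (X := fun (θ : Θ) n ω => |w θ n ω|)
    (Y := fun n ω => D n ω + V n ω) (fun n => Measurable.aestronglyMeasurable ?_) ?_ ?_ hε
  · exact (Measurable.iSup fun t : T =>
      ((measurable_empiricalMean (hφmeas t (hTΘ t.2)) hgmeas n).sub_const _).abs).add
      (measurable_sum _ fun k _ => ((measurable_empiricalMean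
        (measurable_const.indicator (hmeas k)) hgmeas n).sub_const _).abs.mul_const _)
  · filter_upwards [ae_tendstoUniformlyOn_empiricalMean hcont hφmeas hdom hχ hg hdist hΘ hpairwise,
      ae_all_iff.2 fun k => ae_tendsto_empiricalMean_indicator hg hpairwise hdist (hmeas k)]
      with ω hunif hfreq
    have hV : Tendsto (V · ω) atTop (𝓝 0) := by
      simpa using tendsto_finsetSum univ fun k _ =>
        ((hfreq k).sub_const (ρ (Gk k)).toReal).abs.mul_const ((∫ x, χ x ∂ρ) / (ρ (Gk k)).toReal)
    simpa using (hunif.tendsto_iSup_abs_sub hTΘ).add hV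
  · filter_upwards [ae_forall_abs_empiricalMean_sub_integral_le_iSup hcont hφmeas hdom hχ hg hdist
      hTΘ hΘT] with ω hω n θ
    rw [hw, funext₂ hcondE]
    exact (abs_one_div_mul_sum_card_mul_sub_le (ρ := ρ) hmeas hdisj hcover
      (hφmeas θ θ.2).aestronglyMeasurable (hdom θ θ.2) hχ (hI · n ω)).trans
      (add_le_add (hω n θ θ.2) le_rfl)

/-- Second part of Theorem 1: under the uniform-LLN hypotheses (compact `Θ`, `φ_θ`
continuous in `θ` for a.e. `g`, dominated by an integrable `χ`) and a finite measurable
partition into cells of positive measure, the within-cell deviation term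
`ω_n(θ)` satisfies `sup_{θ∈Θ} |ω_n(θ)| → 0` in probability as `n → ∞`. -/
theorem omega_tendsto_zero_in_probability
    {G : Type*} [MeasurableSpace G] (ρ : Measure G) [IsProbabilityMeasure ρ]
    {Ω : Type*} [MeasurableSpace Ω] (P : Measure Ω) [IsProbabilityMeasure P]
    (m : ℕ) (Θ : Set (EuclideanSpace ℝ (Fin m))) (hΘ : IsCompact Θ)
    (φ : EuclideanSpace ℝ (Fin m) → G → ℝ)
    (hcont : ∀ᵐ x ∂ρ, ContinuousOn (fun θ => φ θ x) Θ)
    (hφmeas : ∀ θ ∈ Θ, Measurable (φ θ))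
    (χ : G → ℝ) (hdom : ∀ θ ∈ Θ, ∀ x, |φ θ x| ≤ χ x) (hχ : Integrable χ ρ)
    (K : ℕ) (Gk : Fin K → Set G) (hmeas : ∀ k, MeasurableSet (Gk k))
    (hdisj : Pairwise (Function.onFun Disjoint Gk)) (hcover : (⋃ k, Gk k) = Set.univ)
    (hpos : ∀ k, 0 < ρ (Gk k))
    (g : ℕ → Ω → G) (hgmeas : ∀ i, Measurable (g i))
    (hindep : iIndepFun g P)
    (hdist : ∀ i, Measure.map (g i) P = ρ)
    (I : Fin K → ℕ → Ω → Finset ℕ)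
    (hI : ∀ k n ω i, i ∈ I k n ω ↔ i < n ∧ g i ω ∈ Gk k)
    (condE : EuclideanSpace ℝ (Fin m) → Fin K → ℝ)
    (hcondE : ∀ θ k, condE θ k = (∫ x in Gk k, φ θ x ∂ρ) / (ρ (Gk k)).toReal)
    (w : EuclideanSpace ℝ (Fin m) → ℕ → Ω → ℝ)
    (hw : ∀ θ n ω, w θ n ω = (1 / (n : ℝ)) * ∑ k, ((I k n ω).card : ℝ) *
        ((1 / ((I k n ω).card : ℝ)) * ∑ i ∈ I k n ω, φ θ (g i ω) - condE θ k)) :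
    ∀ ε > (0 : ℝ), Tendsto
      (fun (n : ℕ) => P {ω | ε ≤ ⨆ θ : Θ, |w θ n ω|}) atTop (nhds 0) :=
  omega_tendsto_zero_in_probability_general ρ P m Θ hΘ φ hcont hφmeas χ hdom hχ K Gk hmeas hdisj
    hcover g hgmeas hindep hdist I hI condE hcondE w hw
end
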